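/- arXiv:2104.03485 — 4 statements merged into one kernel-verified Lean document; each statement's English description precedes it below -/
import Mathlib

section
/- Let A be a symmetric n×n real matrix with d = A·1 and h = A·d having all entries strictly positive. Then every eigenvalue of Ā = diag(h)⁻¹ A diag(d) is real. -/
open Matrix Polynomial

lemma exists_eigvec {n : ℕ} (M : Matrix (Fin n) (Fin n) ℂ) {μ : ℂ}
    (h : M.charpoly.IsRoot μ) : ∃ v : Fin n → ℂ, v ≠ 0 ∧ M *ᵥ v = μ • v := by
  have hdet : (Matrix.diagonal (fun _ => μ) - M).det = 0 := by
    have h' : (M.charpoly).eval μ = 0 := h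
    rw [Matrix.charpoly] at h'
    have := RingHom.map_det (Polynomial.evalRingHom μ) (Matrix.charmatrix M)
    rw [show (Polynomial.evalRingHom μ) M.charmatrix.det
      = Polynomial.eval μ M.charmatrix.det from rfl, h'] at this
    have hmap : (Polynomial.evalRingHom μ).mapMatrix (Matrix.charmatrix M)
        = Matrix.diagonal (fun _ => μ) - M := by
      ext i j
      by_cases hij : i = j
      · subst hij
        simp [RingHom.mapMatrix_apply, Matrix.charmatrix_apply_eq]
      · simp [RingHom.mapMatrix_apply, Matrix.charmatrix_apply_ne _ _ _ hij,
          Matrix.diagonal_apply_ne _ hij]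
    rw [hmap] at this
    exact this.symm
  obtain ⟨v, hv0, hv⟩ := Matrix.exists_mulVec_eq_zero_iff.2 hdet
  refine ⟨v, hv0, ?_⟩
  rw [sub_mulVec, sub_eq_zero] at hv
  rw [← hv]
  funext i
  simp [Matrix.mulVec_diagonal]

/-- If `A` is symmetric and `d = A·1`, `h = A·d` have positive entries,
then every (complex) eigenvalue of `Ā = diag(h)⁻¹ A diag(d)` is real. -/
theorem stmt2 {n : ℕ} (A : Matrix (Fin n) (Fin n) ℝ) (hsymm : A.IsSymm)
    (d h : Fin n → ℝ) (hd : d = A *ᵥ 1) (hh : h = A *ᵥ d)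
    (hdpos : ∀ i, 0 < d i) (hhpos : ∀ i, 0 < h i)
    (Abar : Matrix (Fin n) (Fin n) ℝ)
    (hAbar : Abar = (Matrix.diagonal h)⁻¹ * A * Matrix.diagonal d) :
    ∀ μ : ℂ, ((Abar.map (Complex.ofReal)).charpoly).IsRoot μ → μ.im = 0 := by
  intro μ hroot
  obtain ⟨v, hv0, hv⟩ := exists_eigvec _ hroot
  -- entries of Abar
  have hinv : (Matrix.diagonal h)⁻¹ = Matrix.diagonal (fun i => (h i)⁻¹) := by
    apply Matrix.inv_eq_left_inv
    rw [Matrix.diagonal_mul_diagonal]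
    convert Matrix.diagonal_one with i
    exact inv_mul_cancel₀ (hhpos i).ne'
  have hAbar' : ∀ i j, Abar i j = (h i)⁻¹ * A i j * d j := by
    intro i j
    rw [hAbar, hinv]
    simp [Matrix.mul_diagonal, Matrix.diagonal_mul]
  -- key eigen-identity multiplied through by h i
  have key : ∀ i, (∑ j, (A i j : ℂ) * (d j : ℂ) * v j) = μ * (h i : ℂ) * v i := by
    intro i
    have h1 : (∑ j, ((Abar i j : ℝ) : ℂ) * v j) = μ * v i := by
      have := congrFun hv i
      simpa [Matrix.mulVec, dotProduct, Matrix.map_apply, Pi.smul_apply,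
        mul_comm] using this
    have h2 : (∑ j, ((Abar i j : ℝ) : ℂ) * v j)
        = ((h i : ℂ))⁻¹ * ∑ j, (A i j : ℂ) * (d j : ℂ) * v j := by
      rw [Finset.mul_sum]
      refine Finset.sum_congr rfl fun j _ => ?_
      rw [hAbar' i j]
      push_cast
      ring
    have hhne : ((h i : ℂ)) ≠ 0 := by
      exact_mod_cast (hhpos i).ne'
    field_simp [hhne] at h2 ⊢
    rw [h1] at h2
    rw [← h2]
    ring
  -- symmetry of A
  have hA : ∀ i j, A i j = A j i := by
    intro i j
    have := congrFun (congrFun hsymm j) i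
    simpa [Matrix.transpose_apply] using this
  -- the quadratic form
  set Q : ℂ := ∑ i, (d i : ℂ) * (starRingEnd ℂ) (v i) * ∑ j, (A i j : ℂ) * (d j : ℂ) * v j
    with hQ
  set S : ℝ := ∑ i, d i * h i * Complex.normSq (v i) with hS
  have hQS : Q = μ * (S : ℂ) := by
    rw [hQ]
    have : ∀ i, (d i : ℂ) * (starRingEnd ℂ) (v i) * ∑ j, (A i j : ℂ) * (d j : ℂ) * v j
        = μ * ((d i * h i : ℝ) : ℂ) * ((starRingEnd ℂ) (v i) * v i) := by
      intro i
      rw [key i]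
      push_cast
      ring
    rw [Finset.sum_congr rfl fun i _ => this i]
    rw [hS]
    push_cast
    rw [Finset.mul_sum]
    refine Finset.sum_congr rfl fun i _ => ?_
    rw [Complex.normSq_eq_conj_mul_self]
    push_cast
    ring
  have hQconj : (starRingEnd ℂ) Q = Q := by
    rw [hQ, map_sum]
    have lhs : ∀ i, (starRingEnd ℂ) ((d i : ℂ) * (starRingEnd ℂ) (v i)
          * ∑ j, (A i j : ℂ) * (d j : ℂ) * v j)
        = ∑ j, (d i : ℂ) * v i * ((A i j : ℂ) * (d j : ℂ) * (starRingEnd ℂ) (v j)) := by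
      intro i
      simp only [_root_.map_mul, map_sum, Complex.conj_conj, Complex.conj_ofReal,
        Finset.mul_sum]
    rw [Finset.sum_congr rfl fun i _ => lhs i, Finset.sum_comm]
    refine Finset.sum_congr rfl fun i _ => ?_
    rw [Finset.mul_sum]
    refine Finset.sum_congr rfl fun j _ => ?_
    rw [hA j i]
    ring
  have hSpos : 0 < S := by
    obtain ⟨i, hi⟩ := Function.ne_iff.1 hv0
    rw [hS]
    refine Finset.sum_pos' (fun k _ => ?_) ⟨i, Finset.mem_univ i, ?_⟩
    · exact mul_nonneg (mul_nonneg (hdpos k).le (hhpos k).le) (Complex.normSq_nonneg _)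
    · have : 0 < Complex.normSq (v i) := Complex.normSq_pos.2 hi
      have := mul_pos (mul_pos (hdpos i) (hhpos i)) this
      linarith
  -- conclude
  have : (starRingEnd ℂ) μ = μ := by
    have h1 : (starRingEnd ℂ) μ * (S : ℂ) = μ * (S : ℂ) := by
      have := hQconj
      rw [hQS] at this
      simpa [_root_.map_mul, Complex.conj_ofReal] using this
    have hSne : (S : ℂ) ≠ 0 := by exact_mod_cast hSpos.ne'
    exact mul_right_cancel₀ hSne h1
  have := Complex.conj_eq_iff_im.1 this
  exact this
end

section
/- Let A be a symmetric n×n real matrix with d = A·1 and h = A·d having all entries strictly positive. Then the matrix Ā = diag(h)⁻¹ A diag(d) is diagonalizable over ℝ: there exist an invertible real matrix S and a real diagonal matrix Σ with Ā = S⁻¹ Σ S. -/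
/-!
With `s = √(q / p)` entrywise, conjugating `diag(p)⁻¹ A diag(q)` by the positive diagonal
matrix `diag(p s)` gives `diag(s) A diag(s)`, which is symmetric and hence orthogonally
diagonalizable by the spectral theorem.
-/

open Matrix

namespace Matrix

variable {ι : Type*} [Fintype ι] [DecidableEq ι]

def IsDiagonalizable {R : Type*} [CommRing R] (M : Matrix ι ι R) : Prop :=
  ∃ (S : Matrix ι ι R) (σ : ι → R), IsUnit S ∧ M = S⁻¹ * diagonal σ * S

theorem IsDiagonalizable.inv_mul_mul {R : Type*} [CommRing R] {M : Matrix ι ι R}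
    (hM : M.IsDiagonalizable) {P : Matrix ι ι R} (hP : IsUnit P) :
    (P⁻¹ * M * P).IsDiagonalizable := by
  obtain ⟨S, σ, hS, rfl⟩ := hM
  refine ⟨S * P, σ, hS.mul hP, ?_⟩
  simp only [Matrix.mul_inv_rev, Matrix.mul_assoc]

theorem IsHermitian.isDiagonalizable {𝕜 : Type*} [RCLike 𝕜] {A : Matrix ι ι 𝕜}
    (hA : A.IsHermitian) : A.IsDiagonalizable := by
  set U := hA.eigenvectorUnitary
  refine ⟨star (U : Matrix ι ι 𝕜), RCLike.ofReal ∘ hA.eigenvalues,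
    IsUnit.of_mul_eq_one _ (Unitary.coe_star_mul_self U), ?_⟩
  rw [inv_eq_left_inv (B := (U : Matrix ι ι 𝕜)) (Unitary.mul_star_self_of_mem U.2)]
  exact hA.spectral_theorem

theorem inv_diagonal_of_ne_zero {K : Type*} [Field K] {v : ι → K} (hv : ∀ i, v i ≠ 0) :
    (diagonal v)⁻¹ = diagonal v⁻¹ := by
  refine inv_eq_left_inv ?_
  rw [diagonal_mul_diagonal, ← diagonal_one]
  exact congrArg diagonal (funext fun i => inv_mul_cancel₀ (hv i))

theorem diagonal_inv_mul_mul_diagonal_eq {K : Type*} [Field K] (A : Matrix ι ι K)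
    {p q s : ι → K} (hp : ∀ i, p i ≠ 0) (hs : ∀ i, s i ≠ 0) (hpqs : ∀ i, p i * s i ^ 2 = q i) :
    (diagonal p)⁻¹ * A * diagonal q =
      (diagonal (p * s))⁻¹ * (diagonal s * A * diagonal s) * diagonal (p * s) := by
  rw [inv_diagonal_of_ne_zero hp,
    inv_diagonal_of_ne_zero (v := p * s) fun i => mul_ne_zero (hp i) (hs i)]
  ext i j
  simp only [diagonal_mul, mul_diagonal, Pi.inv_apply, Pi.mul_apply, ← hpqs]
  field_simp [hp i, hs i]

theorem IsSymm.isDiagonalizable_diagonal_inv_mul_mul_diagonal {A : Matrix ι ι ℝ}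
    (hA : A.IsSymm) {p q : ι → ℝ} (hp : ∀ i, 0 < p i) (hq : ∀ i, 0 < q i) :
    ((diagonal p)⁻¹ * A * diagonal q).IsDiagonalizable := by
  set s : ι → ℝ := fun i => √(q i / p i)
  have hs : ∀ i, 0 < s i := fun i => Real.sqrt_pos.2 (div_pos (hq i) (hp i))
  have hpqs : ∀ i, p i * s i ^ 2 = q i := fun i => by
    rw [Real.sq_sqrt (div_pos (hq i) (hp i)).le, mul_div_cancel₀ _ (hp i).ne']
  have hB : (diagonal s * A * diagonal s).IsHermitian := by
    simpa using isHermitian_conjTranspose_mul_mul (diagonal s) (isHermitian_iff_isSymm.2 hA)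
  rw [diagonal_inv_mul_mul_diagonal_eq A (fun i => (hp i).ne') (fun i => (hs i).ne') hpqs]
  exact hB.isDiagonalizable.inv_mul_mul <|
    isUnit_diagonal.2 <| Pi.isUnit_iff.2 fun i => (mul_pos (hp i) (hs i)).ne'.isUnit

end Matrix

theorem stmt3_general {n : ℕ} (A : Matrix (Fin n) (Fin n) ℝ) (hsymm : A.IsSymm)
    (d h : Fin n → ℝ)
    (hdpos : ∀ i, 0 < d i) (hhpos : ∀ i, 0 < h i)
    (Abar : Matrix (Fin n) (Fin n) ℝ)
    (hAbar : Abar = (Matrix.diagonal h)⁻¹ * A * Matrix.diagonal d) :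
    ∃ (S : Matrix (Fin n) (Fin n) ℝ) (σ : Fin n → ℝ),
      IsUnit S ∧ Abar = S⁻¹ * Matrix.diagonal σ * S := by
  subst hAbar
  exact hsymm.isDiagonalizable_diagonal_inv_mul_mul_diagonal hhpos hdpos

/-- If `A` is symmetric and `d = A·1`, `h = A·d` have positive entries,
then `Ā = diag(h)⁻¹ A diag(d)` is diagonalizable over ℝ: `Ā = S⁻¹ Σ S` with `S`
invertible and `Σ` real diagonal. -/
theorem stmt3 {n : ℕ} (A : Matrix (Fin n) (Fin n) ℝ) (hsymm : A.IsSymm)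
    (d h : Fin n → ℝ) (hd : d = A *ᵥ 1) (hh : h = A *ᵥ d)
    (hdpos : ∀ i, 0 < d i) (hhpos : ∀ i, 0 < h i)
    (Abar : Matrix (Fin n) (Fin n) ℝ)
    (hAbar : Abar = (Matrix.diagonal h)⁻¹ * A * Matrix.diagonal d) :
    ∃ (S : Matrix (Fin n) (Fin n) ℝ) (σ : Fin n → ℝ),
      IsUnit S ∧ Abar = S⁻¹ * Matrix.diagonal σ * S :=
  stmt3_general A hsymm d h hdpos hhpos Abar hAbar
end

section
/- Let A be the adjacency matrix of an undirected connected graph with nonnegative weights, d = A·1, h = A·d, Ā = diag(h)⁻¹ A diag(d), and L̄ = Iₙ − Ā. Then the kernel of L̄ (as a linear map on ℝⁿ) is exactly the span of the all-ones vector, i.e., rank(L̄) = n − 1. -/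
open Matrix

/-- Under the same connected-graph hypotheses, the kernel of `L̄ = I − Ā`
is exactly the span of the all-ones vector. -/
theorem stmt6 {n : ℕ} (A : Matrix (Fin n) (Fin n) ℝ)
    (hsymm : A.IsSymm) (hnonneg : ∀ i j, 0 ≤ A i j)
    (hconn : ∀ i j : Fin n, Relation.ReflTransGen (fun a b => A a b ≠ 0) i j)
    (d h : Fin n → ℝ) (hd : d = A *ᵥ 1) (hh : h = A *ᵥ d)
    (hdpos : ∀ i, 0 < d i) (hhpos : ∀ i, 0 < h i)
    (Abar Lbar : Matrix (Fin n) (Fin n) ℝ)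
    (hAbar : Abar = (Matrix.diagonal h)⁻¹ * A * Matrix.diagonal d)
    (hLbar : Lbar = 1 - Abar) :
    ∀ x : Fin n → ℝ, Lbar *ᵥ x = 0 ↔ ∃ c : ℝ, x = fun _ => c := by
  have hdet : IsUnit (Matrix.diagonal h).det := by
    rw [Matrix.det_diagonal]
    exact isUnit_iff_ne_zero.mpr (Finset.prod_ne_zero_iff.mpr fun i _ => (hhpos i).ne')
  intro x
  constructor
  · intro hx
    have hAx : Abar *ᵥ x = x := by
      have h0 := hx
      rw [hLbar, sub_mulVec, one_mulVec, sub_eq_zero] at h0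
      exact h0.symm
    have hDh : Matrix.diagonal h *ᵥ x = (A * Matrix.diagonal d) *ᵥ x := by
      conv_lhs => rw [← hAx]
      rw [Matrix.mulVec_mulVec, hAbar, Matrix.mul_assoc ((Matrix.diagonal h)⁻¹),
        ← Matrix.mul_assoc (Matrix.diagonal h), Matrix.mul_nonsing_inv _ hdet, Matrix.one_mul]
    have hmain : ∀ i, h i * x i = ∑ j, A i j * (d j * x j) := by
      intro i
      have := congrFun hDh i
      simpa [Matrix.mulVec, dotProduct, Matrix.mul_apply, Matrix.diagonal,
        Finset.sum_mul, mul_assoc] using this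
    have hkey : ∀ i, ∑ j, A i j * (d j * (x j - x i)) = 0 := by
      intro i
      have hhi : h i = ∑ j, A i j * d j := by
        rw [hh]; simp [Matrix.mulVec, dotProduct]
      have : ∑ j, A i j * (d j * (x j - x i))
          = (∑ j, A i j * (d j * x j)) - (∑ j, A i j * d j) * x i := by
        rw [Finset.sum_mul, ← Finset.sum_sub_distrib]
        exact Finset.sum_congr rfl fun j _ => by ring
      rw [this, ← hmain i, ← hhi]
      ring
    rcases Nat.eq_zero_or_pos n with hn | hn
    · subst hn
      exact ⟨0, funext fun i => i.elim0⟩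
    · have : Nonempty (Fin n) := ⟨⟨0, hn⟩⟩
      obtain ⟨i₀, -, hmax⟩ := Finset.exists_max_image Finset.univ x ⟨Classical.arbitrary _, Finset.mem_univ _⟩
      have hmax' : ∀ j, x j ≤ x i₀ := fun j => hmax j (Finset.mem_univ j)
      have hstep : ∀ b c : Fin n, A b c ≠ 0 → x b = x i₀ → x c = x i₀ := by
        intro b c hbc hxb
        have hnonpos : ∀ j ∈ Finset.univ, A b j * (d j * (x j - x b)) ≤ 0 := by
          intro j _
          apply mul_nonpos_of_nonneg_of_nonpos (hnonneg b j)
          apply mul_nonpos_of_nonneg_of_nonpos (hdpos j).le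
          rw [hxb]
          linarith [hmax' j]
        have hz := (Finset.sum_eq_zero_iff_of_nonpos hnonpos).mp (hkey b) c (Finset.mem_univ c)
        have hApos : 0 < A b c := lt_of_le_of_ne (hnonneg b c) (Ne.symm hbc)
        have h1 : d c * (x c - x b) = 0 := by
          rcases mul_eq_zero.mp hz with h' | h'
          · exact absurd h' hApos.ne'
          · exact h'
        have h2 : x c - x b = 0 := by
          rcases mul_eq_zero.mp h1 with h' | h'
          · exact absurd h' (hdpos c).ne'
          · exact h'
        rw [← hxb]
        linarith
      have hall : ∀ j, x j = x i₀ := by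
        intro j
        induction hconn i₀ j with
        | refl => rfl
        | tail _ hbc ih => exact hstep _ _ hbc ih
      exact ⟨x i₀, funext hall⟩
  · intro ⟨c, hc⟩
    subst hc
    have hA1 : Abar *ᵥ (fun _ => c) = fun _ => c := by
      rw [hAbar]
      have hDd : Matrix.diagonal d *ᵥ (fun _ => c) = fun i => d i * c := by
        ext i; simp [Matrix.mulVec_diagonal]
      rw [Matrix.mul_assoc, ← Matrix.mulVec_mulVec, ← Matrix.mulVec_mulVec, hDd]
      have hAd : A *ᵥ (fun i => d i * c) = fun i => h i * c := by
        ext i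
        simp only [Matrix.mulVec, dotProduct]
        rw [hh]
        simp [Matrix.mulVec, dotProduct, Finset.sum_mul, mul_assoc]
      rw [hAd]
      have : (fun i => h i * c) = Matrix.diagonal h *ᵥ (fun _ => c) := by
        ext i; simp [Matrix.mulVec_diagonal]
      rw [this, Matrix.mulVec_mulVec, Matrix.nonsing_inv_mul _ hdet, one_mulVec]
    rw [hLbar, sub_mulVec, one_mulVec, hA1, sub_self]
end

section
/- Under the same hypotheses, the disagreement state x^dis(t) = Σ_{i=2}^n uᵢ (vᵢᵀ x(t)) satisfies ‖x^dis(t)‖ ≤ C e^{−(t/τ) λ₂} ‖x₀‖ for some constant C > 0 independent of t and x₀; in particular x^dis(t) → 0 exponentially with rate governed by the smallest nonzero eigenvalue λ₂. -/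
/-!
Each `vᵢ` is a left eigenvector of `M` (biorthonormality kills all other rank-one terms), hence of
`exp (-(t/τ) • M)` with eigenvalue `exp (-(t/τ) λᵢ)`. So `vᵢ ⬝ x(t) = exp (-(t/τ) λᵢ) (vᵢ ⬝ x₀)`,
and for `i ≠ 0` the factor is at most `exp (-(t/τ) λ₂)`; the triangle inequality then gives the
bound with `C = 1 + ∑_{i ≠ 0} ‖vᵢ‖₁ ‖uᵢ‖`.
-/

open Matrix

namespace Matrix

variable {m : Type*} [Fintype m]

theorem vecMul_sum_smul_vecMulVec_of_biorthonormal {ι R : Type*} [Fintype ι] [DecidableEq ι]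
    [CommSemiring R] {u v : ι → m → R} {i : ι}
    (hbiorth : ∀ j, v i ⬝ᵥ u j = if i = j then 1 else 0) (lam : ι → R) :
    v i ᵥ* ∑ j, lam j • vecMulVec (u j) (v j) = lam i • v i := by
  simp [vecMul_sum, vecMul_smul, vecMul_vecMulVec, hbiorth]

open scoped Norms.Operator in
theorem vecMul_exp_of_vecMul_eq_smul [DecidableEq m] {𝕂 : Type*} [RCLike 𝕂]
    {A : Matrix m m 𝕂} {w : m → 𝕂} {μ : 𝕂} (h : w ᵥ* A = μ • w) :
    w ᵥ* NormedSpace.exp A = NormedSpace.exp μ • w := by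
  have hpow (k : ℕ) : w ᵥ* A ^ k = μ ^ k • w := by
    induction k with
    | zero => simp
    | succ k ih => rw [pow_succ, ← vecMul_vecMul, ih, smul_vecMul, h, smul_smul, pow_succ]
  let vecMulHom : Matrix m m 𝕂 →+ (m → 𝕂) :=
    AddMonoidHom.mk' (w ᵥ* ·) fun B C => vecMul_add B C w
  have hA := (NormedSpace.exp_series_hasSum_exp' (𝕂 := 𝕂) A).map vecMulHom
    (continuous_const.matrix_vecMul continuous_id)
  have hμ := (NormedSpace.exp_series_hasSum_exp' (𝕂 := 𝕂) μ).smul_const w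
  refine hA.unique ?_
  convert hμ using 2 with k
  simp [vecMulHom, vecMul_smul, hpow, smul_smul]

theorem norm_dotProduct_le {R : Type*} [NonUnitalSeminormedRing R] (w x : m → R) :
    ‖w ⬝ᵥ x‖ ≤ (∑ j, ‖w j‖) * ‖x‖ :=
  calc ‖w ⬝ᵥ x‖ ≤ ∑ j, ‖w j * x j‖ := norm_sum_le _ _
    _ ≤ ∑ j, ‖w j‖ * ‖x‖ :=
      Finset.sum_le_sum fun j _ =>
        (norm_mul_le _ _).trans (by gcongr; exact norm_le_pi_norm x j)
    _ = (∑ j, ‖w j‖) * ‖x‖ := (Finset.sum_mul _ _ _).symm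

theorem norm_sum_smul_dotProduct_le {ι R : Type*} [SeminormedRing R]
    (s : Finset ι) (u v : ι → m → R) (a : ι → R) (B : ℝ) (ha : ∀ i ∈ s, ‖a i‖ ≤ B)
    (x : m → R) :
    ‖∑ i ∈ s, (a i * (v i ⬝ᵥ x)) • u i‖ ≤ (∑ i ∈ s, (∑ j, ‖v i j‖) * ‖u i‖) * B * ‖x‖ := by
  rw [Finset.sum_mul, Finset.sum_mul]
  refine (norm_sum_le _ _).trans (Finset.sum_le_sum fun i hi => ?_)
  calc ‖(a i * (v i ⬝ᵥ x)) • u i‖ ≤ ‖a i‖ * ‖v i ⬝ᵥ x‖ * ‖u i‖ :=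
        (norm_smul_le _ _).trans (by gcongr; exact norm_mul_le _ _)
    _ ≤ B * ((∑ j, ‖v i j‖) * ‖x‖) * ‖u i‖ := by
        gcongr
        · exact (norm_nonneg _).trans (ha i hi)
        · exact ha i hi
        · exact norm_dotProduct_le _ _
    _ = (∑ j, ‖v i j‖) * ‖u i‖ * B * ‖x‖ := by ring

end Matrix

theorem stmt14_general {n : ℕ} (M : Matrix (Fin (n + 1)) (Fin (n + 1)) ℝ)
    (u v : Fin (n + 1) → (Fin (n + 1) → ℝ)) (lam : Fin (n + 1) → ℝ)
    (hdecomp : M = ∑ i, lam i • Matrix.vecMulVec (u i) (v i))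
    (hbiorth : ∀ i j, v i ⬝ᵥ u j = if i = j then (1 : ℝ) else 0)
    (lam₂ : ℝ)
    (hlam₂ : ∀ i, i ≠ 0 → lam₂ ≤ lam i)
    (τ : ℝ) (hτ : 0 < τ) :
    ∃ C > 0, ∀ (x₀ : Fin (n + 1) → ℝ) (t : ℝ), 0 ≤ t →
      ‖∑ i ∈ Finset.univ \ {0},
          (v i ⬝ᵥ ((NormedSpace.exp (-(t / τ) • M)) *ᵥ x₀)) • u i‖ ≤
        C * Real.exp (-(t / τ) * lam₂) * ‖x₀‖ := by
  set S := ∑ i ∈ Finset.univ \ {0}, (∑ j, ‖v i j‖) * ‖u i‖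
  have hS : 0 ≤ S := by positivity
  refine ⟨S + 1, by linarith, fun x₀ t ht => ?_⟩
  have hcoord (i : Fin (n + 1)) : v i ⬝ᵥ NormedSpace.exp (-(t / τ) • M) *ᵥ x₀ =
      Real.exp (-(t / τ) * lam i) * (v i ⬝ᵥ x₀) := by
    have hleft : v i ᵥ* (-(t / τ) • M) = (-(t / τ) * lam i) • v i := by
      rw [vecMul_smul, hdecomp, vecMul_sum_smul_vecMulVec_of_biorthonormal (hbiorth i), smul_smul]
    rw [dotProduct_mulVec, vecMul_exp_of_vecMul_eq_smul hleft, Real.exp_eq_exp_ℝ, smul_dotProduct,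
      smul_eq_mul]
  have hdecay : ∀ i ∈ Finset.univ \ {0}, ‖Real.exp (-(t / τ) * lam i)‖ ≤
      Real.exp (-(t / τ) * lam₂) := fun i hi => by
    have hi0 : i ≠ 0 := by simpa using hi
    rw [Real.norm_of_nonneg (Real.exp_nonneg _), Real.exp_le_exp, neg_mul, neg_mul, neg_le_neg_iff]
    exact mul_le_mul_of_nonneg_left (hlam₂ i hi0) (div_nonneg ht hτ.le)
  simp_rw [hcoord]
  calc _ ≤ S * Real.exp (-(t / τ) * lam₂) * ‖x₀‖ :=
        norm_sum_smul_dotProduct_le _ u v _ _ hdecay x₀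
    _ ≤ (S + 1) * Real.exp (-(t / τ) * lam₂) * ‖x₀‖ := by gcongr; linarith

/-- Under the diagonalizable biorthonormal decomposition with
`0 = λ₀ < λ₂ ≤ λᵢ` for all `i ≠ 0`, the disagreement state
`x^dis(t) = Σ_{i≠0} uᵢ (vᵢᵀ x(t))` decays at exponential rate `λ₂`:
`‖x^dis(t)‖ ≤ C e^{−(t/τ)λ₂} ‖x₀‖` for some `C > 0` independent of `t ≥ 0` and `x₀`. -/
theorem stmt14 {n : ℕ} (M : Matrix (Fin (n + 1)) (Fin (n + 1)) ℝ)
    (u v : Fin (n + 1) → (Fin (n + 1) → ℝ)) (lam : Fin (n + 1) → ℝ)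
    (hdecomp : M = ∑ i, lam i • Matrix.vecMulVec (u i) (v i))
    (hbiorth : ∀ i j, v i ⬝ᵥ u j = if i = j then (1 : ℝ) else 0)
    (hlam0 : lam 0 = 0) (lam₂ : ℝ) (hlam₂pos : 0 < lam₂)
    (hlam₂ : ∀ i, i ≠ 0 → lam₂ ≤ lam i)
    (τ : ℝ) (hτ : 0 < τ) :
    ∃ C > 0, ∀ (x₀ : Fin (n + 1) → ℝ) (t : ℝ), 0 ≤ t →
      ‖∑ i ∈ Finset.univ \ {0},
          (v i ⬝ᵥ ((NormedSpace.exp (-(t / τ) • M)) *ᵥ x₀)) • u i‖ ≤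
        C * Real.exp (-(t / τ) * lam₂) * ‖x₀‖ :=
  stmt14_general M u v lam hdecomp hbiorth lam₂ hlam₂ τ hτ
end
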